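/- arXiv:2304.08300 — 4 statements merged into one kernel-verified Lean document; each statement's English description precedes it below -/
import Mathlib

section
/- Let F and G be finite simple graphs on k and n vertices respectively, with k ≤ n. Then Inj(F, G) = Σ over subsets Y ⊆ V(G) with |Y| ≤ k of (−1)^(k−|Y|) · C(n−|Y|, k−|Y|) · Hom(F, G[Y]), where G[Y] is the induced subgraph of G on Y. -/
open Finset

private lemma coeff_sum_aux (m t : ℕ) (ht : t ≤ m) :
    ∑ i ∈ Finset.range (t+1),
      (m.choose i : ℤ) * ((-1:ℤ)^(t-i) * (((m-i).choose (t-i)) : ℤ))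
      = if t = 0 then 1 else 0 := by
  have key : ∀ i ∈ Finset.range (t+1),
      (m.choose i : ℤ) * ((-1:ℤ)^(t-i) * (((m-i).choose (t-i)) : ℤ))
      = (m.choose t : ℤ) * ((-1:ℤ)^(t-i) * (t.choose i : ℤ)) := by
    intro i hi
    have hit : i ≤ t := Nat.lt_succ_iff.mp (Finset.mem_range.mp hi)
    have h3 : ((m.choose i : ℤ) * (((m-i).choose (t-i)) : ℤ))
        = (m.choose t : ℤ) * (t.choose i : ℤ) := by
      exact_mod_cast congrArg (Nat.cast : ℕ → ℤ) (Nat.choose_mul (n := m) hit).symm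
    linear_combination ((-1:ℤ)^(t-i)) * h3
  rw [Finset.sum_congr rfl key, ← Finset.mul_sum]
  have halt : ∑ i ∈ Finset.range (t+1), (-1:ℤ)^(t-i) * (t.choose i : ℤ)
      = if t = 0 then 1 else 0 := by
    rw [← Finset.sum_range_reflect]
    rw [← Int.alternating_sum_range_choose (n := t)]
    refine Finset.sum_congr rfl fun j hj => ?_
    have hjt : j ≤ t := Nat.lt_succ_iff.mp (Finset.mem_range.mp hj)
    have h1 : t + 1 - 1 - j = t - j := by omega
    have h2 : t - (t - j) = j := by omega
    rw [h1, h2, Nat.choose_symm hjt]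
  rw [halt]
  by_cases h0 : t = 0 <;> simp [h0]

private lemma inner_coeff_sum {β : Type*} [Fintype β] [DecidableEq β]
    (k : ℕ) (hkn : k ≤ Fintype.card β) (S : Finset β) (hS : S.card ≤ k) :
    ∑ Y ∈ Finset.univ.powerset.filter (fun Y : Finset β => Y.card ≤ k),
      (if S ⊆ Y then
        (-1:ℤ)^(k - Y.card) * (((Fintype.card β - Y.card).choose (k - Y.card)) : ℤ)
       else 0)
      = if S.card = k then 1 else 0 := by
  classical
  set n := Fintype.card β with hn
  set s := S.card with hs
  set t := k - s with hts
  set m := n - s with hms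
  have htm : t ≤ m := Nat.sub_le_sub_right hkn s
  -- rewrite as sum over filtered powerset
  rw [← Finset.sum_filter]
  -- reindex by T = Y \ S
  have hbij : ∑ Y ∈ ((Finset.univ.powerset.filter (fun Y : Finset β => Y.card ≤ k)).filter
        (fun Y => S ⊆ Y)),
      (-1:ℤ)^(k - Y.card) * (((n - Y.card).choose (k - Y.card)) : ℤ)
      = ∑ T ∈ ((Finset.univ \ S).powerset.filter (fun T : Finset β => T.card ≤ t)),
      (-1:ℤ)^(t - T.card) * (((m - T.card).choose (t - T.card)) : ℤ) := by
    refine Finset.sum_nbij' (fun Y => Y \ S) (fun T => T ∪ S) ?_ ?_ ?_ ?_ ?_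
    · intro Y hY
      simp only [Finset.mem_filter, Finset.mem_powerset] at hY ⊢
      obtain ⟨⟨_, hYk⟩, hSY⟩ := hY
      refine ⟨Finset.sdiff_subset_sdiff (Finset.subset_univ Y) le_rfl, ?_⟩
      have := Finset.card_sdiff_add_card_eq_card hSY
      omega
    · intro T hT
      simp only [Finset.mem_filter, Finset.mem_powerset] at hT ⊢
      obtain ⟨hTsub, hTt⟩ := hT
      have hdisj : Disjoint T S := by
        refine Finset.disjoint_left.mpr fun a ha => ?_
        have := hTsub ha
        simp only [Finset.mem_sdiff] at this
        exact this.2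
      have hcard := Finset.card_union_of_disjoint hdisj
      exact ⟨⟨Finset.subset_univ _, by omega⟩, Finset.subset_union_right⟩
    · intro Y hY
      simp only [Finset.mem_filter] at hY
      exact Finset.sdiff_union_of_subset hY.2
    · intro T hT
      simp only [Finset.mem_filter, Finset.mem_powerset] at hT
      have hdisj : Disjoint T S := by
        refine Finset.disjoint_left.mpr fun a ha => ?_
        have := hT.1 ha
        simp only [Finset.mem_sdiff] at this
        exact this.2
      exact Finset.union_sdiff_cancel_right hdisj
    · intro Y hY
      simp only [Finset.mem_filter, Finset.mem_powerset] at hY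
      obtain ⟨⟨_, hYk⟩, hSY⟩ := hY
      have hc := Finset.card_sdiff_add_card_eq_card hSY
      have h1 : k - Y.card = t - (Y \ S).card := by omega
      have h2 : n - Y.card = m - (Y \ S).card := by
        have : Y.card ≤ n := by
          rw [hn, ← Finset.card_univ]; exact Finset.card_le_card (Finset.subset_univ Y)
        omega
      rw [h1, h2]
  rw [hbij]
  -- sum over filtered powerset: use sum_powerset_apply_card style
  have hMm : (Finset.univ \ S).card = m := by
    rw [Finset.card_sdiff_of_subset (Finset.subset_univ S), Finset.card_univ]
  have hstep : ∑ T ∈ ((Finset.univ \ S).powerset.filter (fun T : Finset β => T.card ≤ t)),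
      (-1:ℤ)^(t - T.card) * (((m - T.card).choose (t - T.card)) : ℤ)
      = ∑ i ∈ Finset.range (m + 1),
        (m.choose i : ℤ) * (if i ≤ t then (-1:ℤ)^(t-i) * (((m-i).choose (t-i)) : ℤ) else 0) := by
    rw [Finset.sum_filter]
    have := Finset.sum_powerset_apply_card
      (f := fun i => if i ≤ t then (-1:ℤ)^(t-i) * (((m-i).choose (t-i)) : ℤ) else 0)
      (x := Finset.univ \ S)
    rw [hMm] at this
    rw [this]
    refine Finset.sum_congr rfl fun i _ => ?_
    rw [nsmul_eq_mul]
  rw [hstep]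
  have hsub : ∑ i ∈ Finset.range (m + 1),
      (m.choose i : ℤ) * (if i ≤ t then (-1:ℤ)^(t-i) * (((m-i).choose (t-i)) : ℤ) else 0)
      = ∑ i ∈ Finset.range (t + 1),
      (m.choose i : ℤ) * ((-1:ℤ)^(t-i) * (((m-i).choose (t-i)) : ℤ)) := by
    rw [← Finset.sum_subset (Finset.range_subset_range.mpr (Nat.succ_le_succ htm))]
    · refine Finset.sum_congr rfl fun i hi => ?_
      have : i ≤ t := Nat.lt_succ_iff.mp (Finset.mem_range.mp hi)
      rw [if_pos this]
    · intro i _ hi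
      have : ¬ i ≤ t := by
        simp only [Finset.mem_range, Nat.lt_succ_iff] at hi
        omega
      rw [if_neg this, mul_zero]
  rw [hsub, coeff_sum_aux m t htm]
  have : t = 0 ↔ s = k := by omega
  simp [this]

private lemma natCard_hom_induce {α β : Type*} [Fintype α] [Fintype β] [DecidableEq β]
    (F : SimpleGraph α) (G : SimpleGraph β) [Fintype (F →g G)] (Y : Finset β) :
    (Nat.card (F →g (G.induce (↑Y : Set β)))) =
      (Finset.univ.filter (fun f : F →g G => ∀ a, f a ∈ Y)).card := by
  classical
  have e : (F →g (G.induce (↑Y : Set β))) ≃ {f : F →g G // ∀ a, f a ∈ Y} :=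
    { toFun := fun g => ⟨⟨fun a => (g a).1, fun hab => g.map_rel hab⟩, fun a => (g a).2⟩
      invFun := fun f => ⟨fun a => ⟨f.1 a, f.2 a⟩, fun hab => f.1.map_rel hab⟩
      left_inv := fun g => rfl
      right_inv := fun f => rfl }
  rw [Nat.card_congr e, Nat.card_eq_fintype_card, Fintype.card_subtype]

theorem inj_hom_inclusion_exclusion_general {α β : Type*} [Fintype α] [Fintype β] [DecidableEq β]
    (F : SimpleGraph α) (G : SimpleGraph β)
    (h : Fintype.card α ≤ Fintype.card β) :
    (Nat.card {f : F →g G // Function.Injective f} : ℤ) =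
      ∑ Y ∈ Finset.univ.powerset.filter
          (fun Y : Finset β => Y.card ≤ Fintype.card α),
        (-1 : ℤ) ^ (Fintype.card α - Y.card) *
          ((Fintype.card β - Y.card).choose (Fintype.card α - Y.card) : ℤ) *
          (Nat.card (F →g (G.induce (↑Y : Set β))) : ℤ) := by
  classical
  have hfin : Finite (F →g G) :=
    Finite.of_injective (fun f => (f : α → β)) DFunLike.coe_injective
  letI : Fintype (F →g G) := Fintype.ofFinite _
  set k := Fintype.card α with hk
  set n := Fintype.card β with hn
  -- rewrite RHS
  calc (Nat.card {f : F →g G // Function.Injective f} : ℤ)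
      = ∑ f : F →g G, (if Function.Injective f then (1:ℤ) else 0) := by
        rw [Nat.card_eq_fintype_card, Fintype.card_subtype, Finset.sum_boole]
    _ = ∑ f : F →g G, (if (Finset.univ.image ⇑f).card = k then (1:ℤ) else 0) := by
        refine Finset.sum_congr rfl fun f _ => ?_
        congr 1
        have : (Finset.univ.image ⇑f).card = k ↔ Function.Injective ⇑f := by
          rw [hk, ← Finset.card_univ (α := α), Finset.card_image_iff, Finset.coe_univ]
          exact Set.injOn_univ
        simp [this]
    _ = ∑ f : F →g G, ∑ Y ∈ Finset.univ.powerset.filter (fun Y : Finset β => Y.card ≤ k),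
          (if Finset.univ.image ⇑f ⊆ Y then
            (-1:ℤ)^(k - Y.card) * (((n - Y.card).choose (k - Y.card)) : ℤ) else 0) := by
        refine Finset.sum_congr rfl fun f _ => ?_
        rw [inner_coeff_sum k h (Finset.univ.image ⇑f)
          ((Finset.card_image_le).trans (by rw [Finset.card_univ]))]
    _ = ∑ Y ∈ Finset.univ.powerset.filter (fun Y : Finset β => Y.card ≤ k),
          ∑ f : F →g G, (if Finset.univ.image ⇑f ⊆ Y then
            (-1:ℤ)^(k - Y.card) * (((n - Y.card).choose (k - Y.card)) : ℤ) else 0) :=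
        Finset.sum_comm
    _ = ∑ Y ∈ Finset.univ.powerset.filter (fun Y : Finset β => Y.card ≤ k),
        (-1 : ℤ) ^ (k - Y.card) * ((n - Y.card).choose (k - Y.card) : ℤ) *
          (Nat.card (F →g (G.induce (↑Y : Set β))) : ℤ) := by
        refine Finset.sum_congr rfl fun Y _ => ?_
        rw [natCard_hom_induce F G Y]
        rw [← Finset.sum_filter]
        have hfilter : (Finset.univ.filter
            (fun f : F →g G => Finset.univ.image ⇑f ⊆ Y))
            = (Finset.univ.filter (fun f : F →g G => ∀ a, f a ∈ Y)) := by
          refine Finset.filter_congr fun f _ => ?_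
          simp [Finset.image_subset_iff]
        rw [hfilter, Finset.sum_const, nsmul_eq_mul]
        ring
end

section
/- Schwartz–Zippel lemma: let P be a nonzero multivariate polynomial of total degree at most d over a field F, and let S be a finite nonempty subset of F. If r₁, …, rₙ are chosen independently and uniformly at random from S, then the probability that P(r₁, …, rₙ) = 0 is at most d / |S|. Equivalently, the number of tuples (r₁,…,rₙ) ∈ Sⁿ with P(r₁,…,rₙ) = 0 is at most d · |S|^(n−1). -/
open MvPolynomial Finset

theorem sz_aux {F : Type*} [Field F] [DecidableEq F] (S : Finset F) :
    ∀ (n : ℕ) (p : MvPolynomial (Fin n) F), p ≠ 0 → ∀ d : ℕ, p.totalDegree ≤ d →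
    ((Fintype.piFinset fun _ : Fin n => S).filter
        (fun r => MvPolynomial.eval r p = 0)).card * S.card ≤ d * S.card ^ n := by
  intro n
  induction n with
  | zero =>
    intro p hp d hd
    obtain ⟨a, rfl⟩ := C_surjective (Fin 0) p
    have ha : a ≠ 0 := by simpa using hp
    have : ((Fintype.piFinset fun _ : Fin 0 => S).filter
        (fun r => MvPolynomial.eval r (C a) = 0)) = ∅ := by
      apply Finset.filter_false_of_mem
      intro r _
      simpa using ha
    simp [ha]
  | succ n ih =>
    intro p hp d hd
    set q := finSuccEquiv F n p with hq_def
    have hq : q ≠ 0 := by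
      simpa [hq_def] using (map_ne_zero_iff _ (finSuccEquiv F n).injective).2 hp
    set k := q.natDegree with hk_def
    set c := q.leadingCoeff with hc_def
    have hc : c ≠ 0 := Polynomial.leadingCoeff_ne_zero.2 hq
    have hck : c.totalDegree + k ≤ d :=
      le_trans (totalDegree_coeff_finSuccEquiv_add_le p k hc) hd
    have hkd : k ≤ d := le_trans (Nat.le_add_left _ _) hck
    have hcd : c.totalDegree ≤ d - k := Nat.le_sub_of_add_le hck
    set T := Fintype.piFinset fun _ : Fin n => S with hT_def
    set B := T.filter (fun t => MvPolynomial.eval t c = 0) with hB_def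
    have hTcard : T.card = S.card ^ n := by
      simp [hT_def, Fintype.card_piFinset]
    have hB : B.card * S.card ≤ (d - k) * S.card ^ n := ih c hc (d - k) hcd
    -- key: card as fiberwise sum
    have key : ((Fintype.piFinset fun _ : Fin (n+1) => S).filter
        (fun r => MvPolynomial.eval r p = 0)).card
        = ∑ t ∈ T, (S.filter fun y => MvPolynomial.eval (Fin.cons y t) p = 0).card := by
      rw [Finset.card_eq_sum_card_fiberwise (f := fun r => Fin.tail r) (t := T)]
      · apply Finset.sum_congr rfl
        intro t ht
        apply Finset.card_bij (fun r _ => r 0)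
        · intro r hr
          simp only [Finset.mem_filter] at hr ⊢
          refine ⟨by simpa using (Fintype.mem_piFinset.1 hr.1.1) 0, ?_⟩
          have h0 : Fin.cons (r 0) (Fin.tail r) = r := Fin.cons_self_tail r
          rw [← hr.2, h0]
          exact hr.1.2
        · intro r1 hr1 r2 hr2 h
          simp only [Finset.mem_filter] at hr1 hr2
          have h1 : Fin.cons (r1 0) (Fin.tail r1) = r1 := Fin.cons_self_tail r1
          have h2 : Fin.cons (r2 0) (Fin.tail r2) = r2 := Fin.cons_self_tail r2
          rw [← h1, ← h2, hr1.2, hr2.2, h]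
        · intro y hy
          simp only [Finset.mem_filter] at hy
          refine ⟨Fin.cons y t, ?_, by simp⟩
          simp only [Finset.mem_filter]
          refine ⟨⟨?_, hy.2⟩, by simp⟩
          rw [Fintype.mem_piFinset]
          intro i
          refine Fin.cases ?_ ?_ i
          · simpa using hy.1
          · intro j
            simpa using (Fintype.mem_piFinset.1 ht) j
      · intro r hr
        simp only [Finset.mem_coe, Finset.mem_filter] at hr ⊢
        rw [hT_def, Fintype.mem_piFinset]
        intro j
        simpa [Fin.tail] using (Fintype.mem_piFinset.1 hr.1) j.succ
    -- bound each fiber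
    have fiber_bound : ∀ t ∈ T, MvPolynomial.eval t c ≠ 0 →
        (S.filter fun y => MvPolynomial.eval (Fin.cons y t) p = 0).card ≤ k := by
      intro t _ hct
      set q' := q.map (MvPolynomial.eval t) with hq'_def
      have hq' : q' ≠ 0 := by
        intro h
        apply hct
        have h2 := congrArg (fun r => Polynomial.coeff r k) h
        simp only [hq'_def, Polynomial.coeff_map, Polynomial.coeff_zero] at h2
        rw [hc_def, Polynomial.leadingCoeff]
        exact h2
      have hsub : (S.filter fun y => MvPolynomial.eval (Fin.cons y t) p = 0)
          ⊆ q'.roots.toFinset := by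
        intro y hy
        simp only [Finset.mem_filter] at hy
        rw [Multiset.mem_toFinset, Polynomial.mem_roots hq']
        rw [Polynomial.IsRoot.def, hq'_def]
        rw [eval_eq_eval_mv_eval'] at hy
        exact hy.2
      calc (S.filter fun y => MvPolynomial.eval (Fin.cons y t) p = 0).card
          ≤ q'.roots.toFinset.card := Finset.card_le_card hsub
        _ ≤ Multiset.card q'.roots := Multiset.toFinset_card_le _
        _ ≤ q'.natDegree := Polynomial.card_roots' q'
        _ ≤ k := Polynomial.natDegree_map_le
    -- put it together
    rw [key]
    have split : ∑ t ∈ T, (S.filter fun y => MvPolynomial.eval (Fin.cons y t) p = 0).card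
        ≤ B.card * S.card + T.card * k := by
      rw [← Finset.sum_filter_add_sum_filter_not T (fun t => MvPolynomial.eval t c = 0)]
      gcongr with t ht t ht
      · calc ∑ t ∈ B, (S.filter fun y => MvPolynomial.eval (Fin.cons y t) p = 0).card
            ≤ ∑ _t ∈ B, S.card := by
              apply Finset.sum_le_sum
              intro t _
              exact Finset.card_le_card (Finset.filter_subset _ _)
          _ = B.card * S.card := by rw [Finset.sum_const, smul_eq_mul]
      · calc ∑ t ∈ T.filter (fun t => ¬ MvPolynomial.eval t c = 0),
              (S.filter fun y => MvPolynomial.eval (Fin.cons y t) p = 0).card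
            ≤ ∑ t ∈ T.filter (fun t => ¬ MvPolynomial.eval t c = 0), k := by
              apply Finset.sum_le_sum
              intro t ht
              simp only [Finset.mem_filter] at ht
              exact fiber_bound t ht.1 ht.2
          _ ≤ T.card * k := by
              rw [Finset.sum_const, smul_eq_mul]
              gcongr
              exact Finset.filter_subset _ _
    calc (∑ t ∈ T, (S.filter fun y => MvPolynomial.eval (Fin.cons y t) p = 0).card) * S.card
        ≤ (B.card * S.card + T.card * k) * S.card := by gcongr
      _ = B.card * S.card * S.card + T.card * k * S.card := by ring
      _ ≤ (d - k) * S.card ^ n * S.card + S.card ^ n * k * S.card := by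
          gcongr
          rw [hTcard]
      _ = ((d - k) + k) * S.card ^ (n + 1) := by ring
      _ = d * S.card ^ (n + 1) := by rw [Nat.sub_add_cancel hkd]

theorem schwartz_zippel {F : Type*} [Field F] [DecidableEq F] (n : ℕ)
    (p : MvPolynomial (Fin n) F) (hp : p ≠ 0) (d : ℕ) (hd : p.totalDegree ≤ d)
    (S : Finset F) (hS : S.Nonempty) :
    ((Fintype.piFinset fun _ : Fin n => S).filter
        (fun r => MvPolynomial.eval r p = 0)).card ≤ d * S.card ^ (n - 1) := by
  have hSpos : 0 < S.card := hS.card_pos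
  rcases n with _ | m
  · obtain ⟨a, rfl⟩ := C_surjective (Fin 0) p
    have ha : a ≠ 0 := by simpa using hp
    simp [ha]
  · have h := sz_aux S (m + 1) p hp d hd
    have : d * S.card ^ (m + 1) = d * S.card ^ m * S.card := by ring
    rw [this] at h
    exact Nat.le_of_mul_le_mul_right h hSpos
end

section
/- Let G be a directed graph, k ≥ 2, and for each walk W = v₁,…,vₖ and bijection l : [k] → [k] associate the monomial Π_{i=1}^{k−1} x_{vᵢ,vᵢ₊₁} · Π_{i=1}^{k} y_{vᵢ,l(i)} in the polynomial ring over a field of characteristic 2. Then the sum over all k-walks W and all bijections l of these monomials equals the sum restricted to k-walks W that are simple paths (i.e., all vertices distinct): the contributions of non-simple walks cancel over characteristic 2. -/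
open scoped Classical

/-- `w : Fin k → V` is a walk in the directed graph with edge relation `E`. -/
def IsDiWalk {V : Type*} (E : V → V → Prop) {k : ℕ} (w : Fin k → V) : Prop :=
  ∀ i : ℕ, ∀ h : i + 1 < k, E (w ⟨i, Nat.lt_of_succ_lt h⟩) (w ⟨i + 1, h⟩)

/-- The monomial ∏ x_{v_i, v_{i+1}} · ∏ y_{v_i, l(i)} associated to a walk `w`
and a label bijection `σ`. -/
noncomputable def walkMonomial {V : Type*} (F : Type*) [Field F] {k : ℕ}
    (w : Fin k → V) (σ : Equiv.Perm (Fin k)) :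
    MvPolynomial ((V × V) ⊕ (V × Fin k)) F :=
  (∏ i : Fin k, if h : (i : ℕ) + 1 < k then
      MvPolynomial.X (Sum.inl (w i, w ⟨(i : ℕ) + 1, h⟩)) else 1) *
    ∏ i : Fin k, MvPolynomial.X (Sum.inr (w i, σ i))

/-! A walk that repeats a vertex, `w a = w b` with `a ≠ b`, gives the same monomial for the
labellings `σ` and `σ * swap a b`; this fixed-point-free involution pairs the labellings up, and
the pairs cancel in characteristic two. -/

theorem sum_perm_eq_zero_of_mul_swap_invariant {α R : Type*} [Fintype α] [DecidableEq α]
    [Semiring R] [CharP R 2] {f : Equiv.Perm α → R} {a b : α} (hab : a ≠ b)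
    (hf : ∀ σ, f (σ * Equiv.swap a b) = f σ) :
    ∑ σ, f σ = 0 :=
  Finset.sum_ninvolution (· * Equiv.swap a b)
    (fun σ => by rw [hf, CharTwo.add_self_eq_zero])
    (fun σ _ h => hab (by simpa using h))
    (fun _ => Finset.mem_univ _)
    (fun σ => by simp [mul_assoc])

theorem comp_swap_eq_self_of_apply_eq {α β : Type*} [DecidableEq α] {w : α → β} {a b : α}
    (h : w a = w b) : w ∘ Equiv.swap a b = w := by
  rw [Equiv.comp_swap_eq_update, h, Function.update_eq_self, ← h, Function.update_eq_self]

theorem walkMonomial_mul_swap {V : Type*} (F : Type*) [Field F] {k : ℕ} {w : Fin k → V}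
    (σ : Equiv.Perm (Fin k)) {a b : Fin k} (h : w a = w b) :
    walkMonomial F w (σ * Equiv.swap a b) = walkMonomial F w σ := by
  unfold walkMonomial
  congr 1
  conv_lhs => rw [← comp_swap_eq_self_of_apply_eq h]
  exact Equiv.prod_comp (Equiv.swap a b) fun i => MvPolynomial.X (Sum.inr (w i, σ i))

theorem sum_walkMonomial_eq_zero_of_not_injective {V : Type*} (F : Type*) [Field F] [CharP F 2]
    {k : ℕ} {w : Fin k → V} (hw : ¬Function.Injective w) :
    ∑ σ : Equiv.Perm (Fin k), walkMonomial F w σ = 0 := by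
  obtain ⟨a, b, h, hab⟩ : ∃ a b, w a = w b ∧ a ≠ b := by
    simpa [Function.Injective] using hw
  exact sum_perm_eq_zero_of_mul_swap_invariant hab fun σ => walkMonomial_mul_swap F σ h

theorem nonsimple_walks_cancel_char_two_general {V : Type*} [Fintype V] (E : V → V → Prop)
    (k : ℕ) (F : Type*) [Field F] [CharP F 2] :
    ∑ w ∈ Finset.univ.filter (fun w : Fin k → V => IsDiWalk E w),
        ∑ σ : Equiv.Perm (Fin k), walkMonomial F w σ =
      ∑ w ∈ Finset.univ.filter
          (fun w : Fin k → V => IsDiWalk E w ∧ Function.Injective w),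
        ∑ σ : Equiv.Perm (Fin k), walkMonomial F w σ := by
  rw [← Finset.filter_filter]
  refine (Finset.sum_filter_of_ne fun w _ hw => ?_).symm
  by_contra hinj
  exact hw (sum_walkMonomial_eq_zero_of_not_injective F hinj)

theorem nonsimple_walks_cancel_char_two {V : Type*} [Fintype V] (E : V → V → Prop)
    (k : ℕ) (hk : 2 ≤ k) (F : Type*) [Field F] [CharP F 2] :
    ∑ w ∈ Finset.univ.filter (fun w : Fin k → V => IsDiWalk E w),
        ∑ σ : Equiv.Perm (Fin k), walkMonomial F w σ =
      ∑ w ∈ Finset.univ.filter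
          (fun w : Fin k → V => IsDiWalk E w ∧ Function.Injective w),
        ∑ σ : Equiv.Perm (Fin k), walkMonomial F w σ :=
  nonsimple_walks_cancel_char_two_general E k F
end

section
/- Let G be a graph, k ≥ 1, φ : V(G) → [k] a coloring, and for i ∈ [k] let Aᵢ be the set of k-walks in G that visit at least one vertex of color i. Then the set of colorful k-paths in G equals ∩_{i∈[k]} Aᵢ, and by inclusion–exclusion, the number of colorful k-paths equals Σ_{X ⊆ [k]} (−1)^(|X|) · N(X), where N(X) is the number of k-walks all of whose vertices have colors in [k] \ X. -/
open scoped Classical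

/-- `w : Fin k → V` is a walk in the simple graph `G`. -/
def IsGWalk {V : Type*} (G : SimpleGraph V) {k : ℕ} (w : Fin k → V) : Prop :=
  ∀ i : ℕ, ∀ h : i + 1 < k, G.Adj (w ⟨i, Nat.lt_of_succ_lt h⟩) (w ⟨i + 1, h⟩)

/-!
A walk whose colour sequence `Fin k → Fin k` hits every colour is colourful, since such a map is
injective iff it is surjective. For a fixed walk with colour set `C`, the sets `X` of colours it
avoids are exactly the subsets of `Cᶜ`, and `∑_{X ⊆ Cᶜ} (-1)^|X|` is `1` if `C` is everything and
`0` otherwise; summing this over all walks and exchanging the two sums gives the formula.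
-/

open Finset Function

theorem Finset.sum_ite_forall_notMem_neg_one_pow_card {ι κ : Type*} [Fintype ι] (g : κ → ι) :
    ∑ X : Finset ι, (if ∀ j, g j ∉ X then (-1 : ℤ) ^ #X else 0) = if Surjective g then 1 else 0 := by
  have h_avoiding :
      ({X | ∀ j, g j ∉ X} : Finset (Finset ι)) = ({i | i ∉ Set.range g} : Finset ι).powerset := by
    ext X
    simp only [mem_filter, mem_univ, true_and, mem_powerset, subset_iff, Set.mem_range]
    grind
  rw [← sum_filter, h_avoiding, sum_powerset_neg_one_pow_card]
  exact if_congr (by simp [filter_eq_empty_iff, Surjective]) rfl rfl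

theorem Finset.card_filter_surjective_eq_sum {α ι κ : Type*} [Fintype ι] (s : Finset α)
    (col : α → κ → ι) :
    (#{a ∈ s | Surjective (col a)} : ℤ) =
      ∑ X : Finset ι, (-1 : ℤ) ^ #X * #{a ∈ s | ∀ j, col a j ∉ X} := by
  calc (#{a ∈ s | Surjective (col a)} : ℤ)
      = ∑ a ∈ s, ∑ X : Finset ι, (if ∀ j, col a j ∉ X then (-1 : ℤ) ^ #X else 0) := by
        simp [sum_ite_forall_notMem_neg_one_pow_card]
    _ = _ := by
        rw [sum_comm]
        refine sum_congr rfl fun X _ => ?_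
        simp [sum_ite, mul_comm]

theorem colorful_paths_inclusion_exclusion_general {V : Type*} [Fintype V]
    (G : SimpleGraph V) (k : ℕ) (φ : V → Fin k) :
    (Finset.univ.filter
        (fun w : Fin k → V => IsGWalk G w ∧ Function.Injective (fun i => φ (w i))) =
      Finset.univ.filter
        (fun w : Fin k → V => IsGWalk G w ∧ ∀ c : Fin k, ∃ j : Fin k, φ (w j) = c)) ∧
    ((Finset.univ.filter
        (fun w : Fin k → V => IsGWalk G w ∧
          Function.Injective (fun i => φ (w i)))).card : ℤ) =
      ∑ X : Finset (Fin k), (-1 : ℤ) ^ X.card *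
        ((Finset.univ.filter
            (fun w : Fin k → V => IsGWalk G w ∧ ∀ i : Fin k, φ (w i) ∉ X)).card : ℤ) := by
  have h_colorful : ({w | IsGWalk G w ∧ Injective (fun i => φ (w i))} : Finset (Fin k → V)) =
      ({w | IsGWalk G w ∧ ∀ c, ∃ j, φ (w j) = c} : Finset (Fin k → V)) :=
    filter_congr fun w _ => by rw [Finite.injective_iff_surjective]; rfl
  refine ⟨h_colorful, ?_⟩
  have h_count := card_filter_surjective_eq_sum {w : Fin k → V | IsGWalk G w} fun w i => φ (w i)
  simp only [filter_filter] at h_count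
  -- `convert` also reconciles the classical and `Fintype` decidability instances of the filters.
  convert h_count using 6
  exact Finite.injective_iff_surjective

theorem colorful_paths_inclusion_exclusion {V : Type*} [Fintype V]
    (G : SimpleGraph V) (k : ℕ) (hk : 1 ≤ k) (φ : V → Fin k) :
    (Finset.univ.filter
        (fun w : Fin k → V => IsGWalk G w ∧ Function.Injective (fun i => φ (w i))) =
      Finset.univ.filter
        (fun w : Fin k → V => IsGWalk G w ∧ ∀ c : Fin k, ∃ j : Fin k, φ (w j) = c)) ∧
    ((Finset.univ.filter
        (fun w : Fin k → V => IsGWalk G w ∧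
          Function.Injective (fun i => φ (w i)))).card : ℤ) =
      ∑ X : Finset (Fin k), (-1 : ℤ) ^ X.card *
        ((Finset.univ.filter
            (fun w : Fin k → V => IsGWalk G w ∧ ∀ i : Fin k, φ (w i) ∉ X)).card : ℤ) :=
  colorful_paths_inclusion_exclusion_general G k φ
end
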